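/- arXiv:2302.04833 — 2 statements merged into one kernel-verified Lean document; each statement's English description precedes it below -/
import Mathlib

section
/- The Gaussian Rényi divergence bound underlying the Gaussian mechanism's zCDP guarantee: for any α > 1 and means μ, ν with |μ − ν| ≤ Δ, the α-Rényi divergence between Normal(μ, σ²) and Normal(ν, σ²) equals α(μ−ν)²/(2σ²), and hence is at most α·Δ²/(2σ²). -/
open MeasureTheory ProbabilityTheory
open scoped NNReal

open Real
open scoped ENNReal

lemma gauss_pointwise (α μ ν x : ℝ) (v : ℝ≥0) (hv : 0 < v) :
    gaussianPDFReal ν v x * (gaussianPDFReal μ v x / gaussianPDFReal ν v x) ^ α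
      = Real.exp (α * (α - 1) * (μ - ν) ^ 2 / (2 * (v : ℝ)))
        * gaussianPDFReal (α * μ + (1 - α) * ν) v x := by
  have hvR : (0:ℝ) < v := hv
  simp only [gaussianPDFReal]
  rw [mul_div_mul_left _ _ (by positivity : ((Real.sqrt (2 * π * v))⁻¹ : ℝ) ≠ 0),
    ← Real.exp_sub, ← Real.exp_mul]
  rw [mul_left_comm, mul_assoc, ← Real.exp_add, ← Real.exp_add]
  congr 2
  field_simp
  ring

lemma gauss_integral (α μ ν : ℝ) (hα : 1 < α) (v : ℝ≥0) (hv : 0 < v) :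
    ∫ x, ((gaussianReal μ v).rnDeriv (gaussianReal ν v) x).toReal ^ α ∂(gaussianReal ν v)
      = Real.exp (α * (α - 1) * (μ - ν) ^ 2 / (2 * (v : ℝ))) := by
  have hv0 : v ≠ 0 := hv.ne'
  have hvR : (0:ℝ) < v := hv
  have hq_ne_zero : ∀ᵐ x ∂(volume : Measure ℝ), gaussianPDF ν v x ≠ 0 :=
    ae_of_all _ fun x => (gaussianPDF_pos ν hv0 x).ne'
  have hq_ne_top : ∀ᵐ x ∂(volume : Measure ℝ), gaussianPDF ν v x ≠ ∞ :=
    ae_of_all _ fun x => ENNReal.ofReal_ne_top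
  have h1 := Measure.rnDeriv_withDensity_right (gaussianReal μ v) volume
    (measurable_gaussianPDF ν v).aemeasurable hq_ne_zero hq_ne_top
  rw [← gaussianReal_of_var_ne_zero ν hv0] at h1
  have h2 := rnDeriv_gaussianReal μ v
  have hrn : (gaussianReal μ v).rnDeriv (gaussianReal ν v)
      =ᵐ[volume] fun x => (gaussianPDF ν v x)⁻¹ * gaussianPDF μ v x := by
    filter_upwards [h1, h2] with x hx1 hx2
    rw [hx1, hx2]
  have hrnQ := (gaussianReal_absolutelyContinuous ν hv0).ae_eq hrn
  rw [integral_congr_ae (g := fun x => ((gaussianPDF ν v x)⁻¹ * gaussianPDF μ v x).toReal ^ α)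
    (by filter_upwards [hrnQ] with x hx; rw [hx])]
  have hQ : gaussianReal ν v
      = volume.withDensity (fun x => ((gaussianPDFReal ν v x).toNNReal : ℝ≥0∞)) := by
    rw [gaussianReal_of_var_ne_zero ν hv0]; rfl
  rw [hQ, integral_withDensity_eq_integral_smul (measurable_gaussianPDFReal ν v).real_toNNReal]
  have hpt : ∀ x : ℝ,
      (gaussianPDFReal ν v x).toNNReal •
        ((gaussianPDF ν v x)⁻¹ * gaussianPDF μ v x).toReal ^ α
      = Real.exp (α * (α - 1) * (μ - ν) ^ 2 / (2 * (v : ℝ)))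
        * gaussianPDFReal (α * μ + (1 - α) * ν) v x := by
    intro x
    have hqpos := gaussianPDFReal_pos ν v x hv0
    have hppos := gaussianPDFReal_nonneg μ v x
    rw [NNReal.smul_def, smul_eq_mul, Real.coe_toNNReal _ hqpos.le, gaussianPDF, gaussianPDF,
      ENNReal.toReal_mul, ENNReal.toReal_inv, ENNReal.toReal_ofReal hqpos.le,
      ENNReal.toReal_ofReal hppos, inv_mul_eq_div]
    exact gauss_pointwise α μ ν x v hv
  rw [integral_congr_ae (ae_of_all _ hpt), integral_const_mul,
    integral_gaussianPDFReal_eq_one _ hv0, mul_one]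

/-- α-Rényi divergence between two measures on ℝ. -/
noncomputable def renyiDivM (α : ℝ) (P Q : MeasureTheory.Measure ℝ) : ℝ :=
  (α - 1)⁻¹ * Real.log (∫ x, (P.rnDeriv Q x).toReal ^ α ∂Q)

/-- Rényi divergence between Gaussians with common variance σ²: it equals
α(μ−ν)²/(2σ²), and hence is at most αΔ²/(2σ²) whenever |μ − ν| ≤ Δ. -/
theorem stmt_11 (α μ ν Δ : ℝ) (hα : 1 < α) (v : ℝ≥0) (hv : 0 < v)
    (hΔ : |μ - ν| ≤ Δ) :
    renyiDivM α (gaussianReal μ v) (gaussianReal ν v) = α * (μ - ν) ^ 2 / (2 * (v : ℝ)) ∧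
    renyiDivM α (gaussianReal μ v) (gaussianReal ν v) ≤ α * Δ ^ 2 / (2 * (v : ℝ)) := by
  have hvR : (0:ℝ) < v := hv
  have heq : renyiDivM α (gaussianReal μ v) (gaussianReal ν v)
      = α * (μ - ν) ^ 2 / (2 * (v : ℝ)) := by
    have hα1 : α - 1 ≠ 0 := by linarith
    rw [renyiDivM, gauss_integral α μ ν hα v hv, Real.log_exp]
    field_simp
  refine ⟨heq, heq ▸ ?_⟩
  have habs := abs_le.mp hΔ
  have hsq : (μ - ν) ^ 2 ≤ Δ ^ 2 := sq_le_sq' habs.1 habs.2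
  have hα0 : (0:ℝ) ≤ α := by linarith
  gcongr
end

section
/- At maximal drift parameter γ = 1, the drift procedure deterministically reverses the ordering of probability masses: if the historical feature distribution assigns masses p_1 ≥ p_2 ≥ ... ≥ p_d to features 1,...,d, then the future distribution assigns mass p_{d+1−i} to feature i, and among all distributions obtained by permuting the masses (p_1,...,p_d) over the features, this reversal maximizes the total variation distance to the historical distribution. -/
/-!
Write `w k = p k - p (k + 1) ≥ 0` for the gaps of the sorted masses. Then `|p i - p j|` is the
sum of the gaps `w k` over the thresholds `k` separating `i` and `j`, so
`∑ i, |p i - p (σ i)| = ∑ k, w k * c_k(σ)`, where `c_k(σ)` counts the `i` for which exactly one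
of `i` and `σ i` lies in `A_k = {i | i ≤ k}`. This is `#(A_k ∆ σ⁻¹ A_k)`, a symmetric difference of
two sets of the same size, hence at most `2 * min (#A_k) (d - #A_k)`; the reversal attains this
bound for every `k` at once, because `rev⁻¹ A_k` is either disjoint from `A_k` or covers its
complement.
-/

open Finset
open scoped symmDiff

namespace Finset

variable {α : Type*} [DecidableEq α]

lemma card_symmDiff_add_two_mul_card_inter (s t : Finset α) :
    #(s ∆ t) + 2 * #(s ∩ t) = #s + #t := by
  rw [symmDiff_eq_sup_sdiff_inf, sup_eq_union, inf_eq_inter,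
    card_sdiff_of_subset inter_subset_union, ← card_union_add_card_inter s t]
  have := card_le_card (inter_subset_union (s := s) (t := t))
  omega

lemma card_symmDiff_le_of_disjoint_or_union_eq_univ [Fintype α] {s t u : Finset α} (ht : #t = #s)
    (hu : #u = #s) (hsu : Disjoint s u ∨ s ∪ u = univ) : #(s ∆ t) ≤ #(s ∆ u) := by
  have hst := card_symmDiff_add_two_mul_card_inter s t
  have hsu' := card_symmDiff_add_two_mul_card_inter s u
  have hst_union := card_union_add_card_inter s t
  have hst_union_le := card_le_univ (s ∪ t)
  rcases hsu with hdisj | hcover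
  · rw [disjoint_iff_inter_eq_empty.1 hdisj, card_empty] at hsu'
    omega
  · have hsu_union := card_union_add_card_inter s u
    rw [hcover, card_univ] at hsu_union
    omega

end Finset

lemma Antitone.abs_sub_eq_sum_Ico {f : ℕ → ℝ} (hf : Antitone f) {m n : ℕ} (h : m ≤ n) :
    |f m - f n| = ∑ k ∈ Ico m n, (f k - f (k + 1)) := by
  rw [abs_of_nonneg (sub_nonneg.2 (hf h)), ← neg_sub, ← sum_Ico_sub f h, ← sum_neg_distrib]
  simp only [neg_sub]

lemma Antitone.abs_sub_eq_sum_separating {f : ℕ → ℝ} (hf : Antitone f) {m n N : ℕ}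
    (hm : m ≤ N) (hn : n ≤ N) :
    |f m - f n| = ∑ k ∈ range N with ¬(m ≤ k ↔ n ≤ k), (f k - f (k + 1)) := by
  wlog h : m ≤ n generalizing m n
  · rw [abs_sub_comm, this hn hm (by omega)]
    simp only [iff_comm]
  rw [hf.abs_sub_eq_sum_Ico h]
  congr 1
  ext k
  simp only [mem_Ico, mem_filter, mem_range]
  omega

lemma Antitone.sum_abs_sub_eq_sum_card_mul {ι : Type*} [Fintype ι] {f : ℕ → ℝ}
    (hf : Antitone f) {a b : ι → ℕ} {N : ℕ} (ha : ∀ i, a i ≤ N) (hb : ∀ i, b i ≤ N) :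
    ∑ i, |f (a i) - f (b i)| =
      ∑ k ∈ range N, #{i | ¬(a i ≤ k ↔ b i ≤ k)} * (f k - f (k + 1)) := by
  simp_rw [hf.abs_sub_eq_sum_separating (ha _) (hb _)]
  rw [sum_comm' (t' := range N) (s' := fun k => {i | ¬(a i ≤ k ↔ b i ≤ k)})]
  · simp only [sum_const, nsmul_eq_mul]
  · simp only [mem_univ, mem_filter, true_and]
    tauto

lemma Antitone.sum_abs_sub_le_of_card_le {ι : Type*} [Fintype ι] {f : ℕ → ℝ}
    (hf : Antitone f) {a b c : ι → ℕ} {N : ℕ} (ha : ∀ i, a i ≤ N) (hb : ∀ i, b i ≤ N)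
    (hc : ∀ i, c i ≤ N)
    (hcard : ∀ k, #{i | ¬(a i ≤ k ↔ b i ≤ k)} ≤ #{i | ¬(a i ≤ k ↔ c i ≤ k)}) :
    ∑ i, |f (a i) - f (b i)| ≤ ∑ i, |f (a i) - f (c i)| := by
  rw [hf.sum_abs_sub_eq_sum_card_mul ha hb, hf.sum_abs_sub_eq_sum_card_mul ha hc]
  refine sum_le_sum fun k _ => mul_le_mul_of_nonneg_right ?_ (sub_nonneg.2 (hf k.le_succ))
  exact_mod_cast hcard k

lemma Fin.card_separated_perm_le_card_separated_rev {d : ℕ} (σ : Equiv.Perm (Fin d)) (k : ℕ) :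
    #{i : Fin d | ¬((i : ℕ) ≤ k ↔ (σ i : ℕ) ≤ k)} ≤
      #{i : Fin d | ¬((i : ℕ) ≤ k ↔ (i.rev : ℕ) ≤ k)} := by
  have separated_eq_symmDiff (q : Fin d → Fin d) :
      ({i | ¬((i : ℕ) ≤ k ↔ (q i : ℕ) ≤ k)} : Finset (Fin d)) =
        ({i | (i : ℕ) ≤ k} : Finset (Fin d)) ∆ ({i | (q i : ℕ) ≤ k} : Finset (Fin d)) := by
    ext i
    simp only [mem_filter, mem_univ, true_and, mem_symmDiff]
    tauto
  rw [separated_eq_symmDiff, separated_eq_symmDiff]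
  refine card_symmDiff_le_of_disjoint_or_union_eq_univ
    (card_equiv σ fun i => by simp) (card_equiv Fin.revPerm fun i => by simp) ?_
  rcases lt_or_ge (2 * k + 1) d with hk | hk
  · left
    rw [disjoint_filter]
    intro i _ hi
    rw [Fin.val_rev]
    omega
  · right
    ext i
    simp only [mem_union, mem_filter, mem_univ, true_and, iff_true, Fin.val_rev]
    omega

theorem Antitone.sum_abs_sub_perm_le_sum_abs_sub_rev {d : ℕ} {p : Fin d → ℝ} (hp : Antitone p)
    (σ : Equiv.Perm (Fin d)) : ∑ i, |p i - p (σ i)| ≤ ∑ i, |p i - p i.rev| := by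
  cases d with
  | zero => simp
  | succ n =>
    set f : ℕ → ℝ := fun m => p (Fin.clamp m n)
    have hf : Antitone f := hp.comp_monotone Fin.clamp_monotone
    have hpf (i : Fin (n + 1)) : p i = f i := by
      simp [f, Fin.clamp, Nat.min_eq_left i.is_le]
    simp only [hpf]
    exact hf.sum_abs_sub_le_of_card_le (fun i => i.is_le) (fun i => (σ i).is_le)
      (fun i => i.rev.is_le) (Fin.card_separated_perm_le_card_separated_rev σ)

theorem stmt_18_general {d : ℕ} (p : Fin d → ℝ)
    (hsorted : ∀ i j : Fin d, i ≤ j → p j ≤ p i) :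
    ∀ σ : Equiv.Perm (Fin d),
      (1 / 2) * ∑ i, |p i - p (σ i)| ≤ (1 / 2) * ∑ i, |p i - p i.rev| := by
  intro σ
  exact mul_le_mul_of_nonneg_left
    (Antitone.sum_abs_sub_perm_le_sum_abs_sub_rev (fun i j h => hsorted i j h) σ) (by norm_num)

/-- At maximal drift γ = 1 the masses are reassigned in reverse order, and among all
permutations of the sorted masses (p_1 ≥ ... ≥ p_d), the reversal maximizes the total
variation distance (1/2)∑|p_i − p_{σ(i)}| to the historical distribution. -/
theorem stmt_18 {d : ℕ} (hd : 1 ≤ d) (p : Fin d → ℝ) (hnn : ∀ i, 0 ≤ p i)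
    (hsum : ∑ i, p i = 1) (hsorted : ∀ i j : Fin d, i ≤ j → p j ≤ p i) :
    ∀ σ : Equiv.Perm (Fin d),
      (1 / 2) * ∑ i, |p i - p (σ i)| ≤ (1 / 2) * ∑ i, |p i - p i.rev| :=
  stmt_18_general p hsorted
end
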